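/- Let V and W be two k-dimensional linear subspaces of R^d with k > d/2 and θ = ∠(V,W) < π/2. Then there exist orthonormal bases {v_1,…,v_k} of V and {w_1,…,w_k} of W such that v_i = w_i for i ∈ [1, 2k−d], ∠(v_i, w_i) ≤ θ for all i ∈ [1,k], and ∠(v_i, w_j − v_j) ∈ [(π−θ)/2, (π+θ)/2] for all i,j ∈ [1,k]. In particular, for distinct i and j, if i ≤ 2k−d or j ≤ 2k−d, then v_i ⊥ w_j. -/

import Mathlib

open Set Real

noncomputable def subAngle {d : ℕ} (V W : Submodule ℝ (EuclideanSpace ℝ (Fin d))) : ℝ :=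
  sSup {θ | ∃ v ∈ V, ‖v‖ = 1 ∧
    θ = InnerProductGeometry.angle v
      ((W.orthogonalProjection v : W) : EuclideanSpace ℝ (Fin d))}

lemma proj_inner_eq {d : ℕ} (U : Submodule ℝ (EuclideanSpace ℝ (Fin d)))
    (z y : EuclideanSpace ℝ (Fin d)) (hy : y ∈ U) :
    (inner ℝ (((U.orthogonalProjection z : U) : EuclideanSpace ℝ (Fin d))) y : ℝ) = inner ℝ z y := by
  have h := Submodule.starProjection_inner_eq_zero (K := U) z y hy
  rw [inner_sub_left, sub_eq_zero] at h
  exact h.symm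

lemma proj_norm_le {d : ℕ} (W : Submodule ℝ (EuclideanSpace ℝ (Fin d)))
    (x : EuclideanSpace ℝ (Fin d)) :
    ‖((W.orthogonalProjection x : W) : EuclideanSpace ℝ (Fin d))‖ ≤ ‖x‖ := by
  have h := (W.orthogonalProjection).le_opNorm x
  calc ‖((W.orthogonalProjection x : W) : EuclideanSpace ℝ (Fin d))‖
      = ‖W.orthogonalProjection x‖ := rfl
    _ ≤ ‖W.orthogonalProjection‖ * ‖x‖ := h
    _ ≤ 1 * ‖x‖ :=
        mul_le_mul_of_nonneg_right (Submodule.orthogonalProjection_norm_le W) (norm_nonneg x)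
    _ = ‖x‖ := one_mul _

set_option maxHeartbeats 2000000 in
/-- Let `V, W` be `k`-dimensional subspaces of `ℝ^d` with `k > d/2` and
`θ = ∠(V,W) < π/2`.  Then there exist orthonormal bases `v₁,…,v_k` of `V` and
`w₁,…,w_k` of `W` with `vᵢ = wᵢ` for `i ∈ [1, 2k−d]`, `∠(vᵢ,wᵢ) ≤ θ` for all `i`,
`∠(vᵢ, wⱼ − vⱼ) ∈ [(π−θ)/2, (π+θ)/2]` for all `i, j`; in particular `vᵢ ⊥ wⱼ` for
distinct `i, j` whenever `i ∈ [1,2k−d]` or `j ∈ [1,2k−d]` (indices 0-based here). -/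
theorem stmt3 (d k : ℕ) (hk : d < 2 * k)
    (V W : Submodule ℝ (EuclideanSpace ℝ (Fin d)))
    (hV : Module.finrank ℝ V = k) (hW : Module.finrank ℝ W = k)
    (θ : ℝ) (hθ : θ = subAngle V W) (hθlt : θ < π / 2) :
    ∃ v w : Fin k → EuclideanSpace ℝ (Fin d),
      Orthonormal ℝ v ∧ Submodule.span ℝ (Set.range v) = V ∧
      Orthonormal ℝ w ∧ Submodule.span ℝ (Set.range w) = W ∧
      (∀ i : Fin k, (i : ℕ) < 2 * k - d → v i = w i) ∧
      (∀ i, InnerProductGeometry.angle (v i) (w i) ≤ θ) ∧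
      (∀ i j, InnerProductGeometry.angle (v i) (w j - v j) ∈
        Set.Icc ((π - θ) / 2) ((π + θ) / 2)) ∧
      (∀ i j : Fin k, i ≠ j → ((i : ℕ) < 2 * k - d ∨ (j : ℕ) < 2 * k - d) →
        (inner ℝ (v i) (w j) : ℝ) = 0) := by
  classical
  have hk0 : 0 < k := by omega
  have hkd : k ≤ d := by
    have h := V.finrank_le
    rw [hV, finrank_euclideanSpace_fin] at h
    exact h
  set m : ℕ := 2 * k - d with hm
  -- abbreviation for the projection onto W (as ambient vector)
  let Q : EuclideanSpace ℝ (Fin d) → EuclideanSpace ℝ (Fin d) :=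
    fun z => ((W.orthogonalProjection z : W) : EuclideanSpace ℝ (Fin d))
  -- the symmetric operator T = P_V ∘ P_W on V
  let T : V →ₗ[ℝ] V :=
    (V.orthogonalProjection : EuclideanSpace ℝ (Fin d) →ₗ[ℝ] V) ∘ₗ
      W.subtype ∘ₗ (W.orthogonalProjection : EuclideanSpace ℝ (Fin d) →ₗ[ℝ] W) ∘ₗ V.subtype
  have hTapp : ∀ x : V, ((T x : EuclideanSpace ℝ (Fin d))) =
      ((V.orthogonalProjection (Q (x : EuclideanSpace ℝ (Fin d))) : V) :
        EuclideanSpace ℝ (Fin d)) := fun x => rfl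
  have fact2 : ∀ (x : V) (y : EuclideanSpace ℝ (Fin d)), y ∈ V →
      (inner ℝ ((T x : EuclideanSpace ℝ (Fin d))) y : ℝ) = inner ℝ (Q x) y := by
    intro x y hy
    rw [hTapp]
    exact proj_inner_eq V (Q x) y hy
  have fact3 : ∀ x y : V, (inner ℝ ((T x : EuclideanSpace ℝ (Fin d)))
      ((y : EuclideanSpace ℝ (Fin d))) : ℝ) = inner ℝ (Q x) (Q y) := by
    intro x y
    rw [fact2 x y y.2]
    have hy := proj_inner_eq W (y : EuclideanSpace ℝ (Fin d))
      (Q (x : EuclideanSpace ℝ (Fin d))) (SetLike.coe_mem _)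
    calc (inner ℝ (Q (x : EuclideanSpace ℝ (Fin d))) ((y : EuclideanSpace ℝ (Fin d))) : ℝ)
        = inner ℝ ((y : EuclideanSpace ℝ (Fin d))) (Q (x : EuclideanSpace ℝ (Fin d))) :=
          real_inner_comm _ _
      _ = inner ℝ (Q (y : EuclideanSpace ℝ (Fin d))) (Q (x : EuclideanSpace ℝ (Fin d))) := hy.symm
      _ = inner ℝ (Q (x : EuclideanSpace ℝ (Fin d))) (Q (y : EuclideanSpace ℝ (Fin d))) :=
          real_inner_comm _ _
  have hsym : T.IsSymmetric := by
    intro x y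
    have h1 : (inner ℝ (T x) y : ℝ) = inner ℝ (Q x) (Q y) := fact3 x y
    have h2 : (inner ℝ (T y) x : ℝ) = inner ℝ (Q y) (Q x) := fact3 y x
    have h3 : (inner ℝ x (T y) : ℝ) = inner ℝ (T y) x := real_inner_comm _ _
    rw [h1, h3, h2]
    exact real_inner_comm _ _
  -- spectral decomposition
  obtain ⟨u, hu⟩ : ∃ u : OrthonormalBasis (Fin k) ℝ V,
      ∀ i, T (u i) = hsym.eigenvalues hV i • u i :=
    ⟨hsym.eigenvectorBasis hV, fun i => hsym.apply_eigenvectorBasis hV i⟩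
  set μ : Fin k → ℝ := hsym.eigenvalues hV with hμdef
  set v0 : Fin k → EuclideanSpace ℝ (Fin d) := fun i => ((u i : V) : EuclideanSpace ℝ (Fin d))
    with hv0def
  have hv0 : Orthonormal ℝ v0 := by
    rw [orthonormal_iff_ite]
    intro i j
    have h := u.orthonormal
    rw [orthonormal_iff_ite] at h
    exact h i j
  have hv0V : ∀ i, v0 i ∈ V := fun i => SetLike.coe_mem _
  have hv0n : ∀ i, ‖v0 i‖ = 1 := fun i => hv0.1 i
  have hv0inner : ∀ i j, (inner ℝ (v0 i) (v0 j) : ℝ) = if i = j then 1 else 0 := by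
    rw [← orthonormal_iff_ite]; exact hv0
  have hPP : ∀ i j, (inner ℝ (Q (v0 i)) (Q (v0 j)) : ℝ) = μ i * (if i = j then 1 else 0) := by
    intro i j
    rw [← fact3 (u i) (u j)]
    have : ((T (u i) : V) : EuclideanSpace ℝ (Fin d)) = μ i • v0 i := by
      rw [hu i]; rfl
    rw [this, real_inner_smul_left, hv0inner]
  have hQnormsq : ∀ i, ‖Q (v0 i)‖ ^ 2 = μ i := by
    intro i
    have h := hPP i i
    rw [if_pos rfl, mul_one, real_inner_self_eq_norm_sq] at h
    exact h
  -- the angle bound for unit vectors of V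
  have hbdd : BddAbove {t | ∃ v ∈ V, ‖v‖ = 1 ∧
      t = InnerProductGeometry.angle v
        ((W.orthogonalProjection v : W) : EuclideanSpace ℝ (Fin d))} := by
    refine ⟨π, ?_⟩
    rintro t ⟨x, hx, hxn, rfl⟩
    exact InnerProductGeometry.angle_le_pi _ _
  have hang : ∀ x : EuclideanSpace ℝ (Fin d), x ∈ V → ‖x‖ = 1 →
      InnerProductGeometry.angle x (Q x) ≤ θ := by
    intro x hx hxn
    rw [hθ]
    exact le_csSup hbdd ⟨x, hx, hxn, rfl⟩
  have hθ0 : 0 ≤ θ := by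
    refine le_trans (InnerProductGeometry.angle_nonneg (v0 ⟨0, hk0⟩) (Q (v0 ⟨0, hk0⟩))) ?_
    exact hang _ (hv0V _) (hv0n _)
  have hcosθ : 0 < Real.cos θ := by
    apply Real.cos_pos_of_mem_Ioo
    constructor
    · have := Real.pi_pos; linarith
    · exact hθlt
  have hC : ∀ x : EuclideanSpace ℝ (Fin d), x ∈ V → ‖x‖ = 1 → Real.cos θ ≤ ‖Q x‖ := by
    intro x hx hxn
    have hangle := hang x hx hxn
    have hQn1 : ‖Q x‖ ≤ 1 := by
      have := proj_norm_le W x; rw [hxn] at this; exact this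
    have hQne : Q x ≠ 0 := by
      intro h0
      have : InnerProductGeometry.angle x (Q x) = π / 2 := by
        rw [h0]; exact InnerProductGeometry.angle_zero_right x
      rw [this] at hangle; linarith
    have hQpos : 0 < ‖Q x‖ := norm_pos_iff.mpr hQne
    have hinner : (inner ℝ x (Q x) : ℝ) = ‖Q x‖ ^ 2 := by
      rw [← proj_inner_eq W x (Q x) (SetLike.coe_mem _)]
      exact real_inner_self_eq_norm_sq _
    have hexp : InnerProductGeometry.angle x (Q x) = Real.arccos ‖Q x‖ := by
      unfold InnerProductGeometry.angle
      rw [hinner, hxn, one_mul, sq, mul_div_assoc, div_self hQpos.ne', mul_one]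
    rw [hexp] at hangle
    have h1 : Real.cos θ ≤ Real.cos (Real.arccos ‖Q x‖) :=
      Real.cos_le_cos_of_nonneg_of_le_pi (Real.arccos_nonneg _) (by linarith [Real.pi_pos]) hangle
    rwa [Real.cos_arccos (by linarith) hQn1] at h1
  -- counting: eigenvalue 1 has multiplicity at least m
  have hfrVW : m ≤ Module.finrank ℝ ↥(V ⊓ W) := by
    have h1 := Submodule.finrank_sup_add_finrank_inf_eq V W
    have h2 : Module.finrank ℝ ↥(V ⊔ W) ≤ d := by
      have h := (V ⊔ W).finrank_le
      rwa [finrank_euclideanSpace_fin] at h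
    rw [hV, hW] at h1
    omega
  set S : Finset (Fin k) := Finset.univ.filter (fun i => μ i = 1) with hSdef
  have hfix : ∀ x : V, (x : EuclideanSpace ℝ (Fin d)) ∈ W → T x = x := by
    intro x hxW
    apply Subtype.coe_injective
    show ((T x : V) : EuclideanSpace ℝ (Fin d)) = (x : EuclideanSpace ℝ (Fin d))
    rw [hTapp]
    have h1 : Q (x : EuclideanSpace ℝ (Fin d)) = (x : EuclideanSpace ℝ (Fin d)) :=
      Submodule.starProjection_eq_self_iff.mpr hxW
    rw [h1]
    exact Submodule.starProjection_eq_self_iff.mpr (SetLike.coe_mem x)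
  have hspan : ∀ x : V, (x : EuclideanSpace ℝ (Fin d)) ∈ W →
      x ∈ Submodule.span ℝ ((fun i => u i) '' (S : Set (Fin k))) := by
    intro x hxW
    have hzero : ∀ i, i ∉ S → (inner ℝ (u i) x : ℝ) = 0 := by
      intro i hiS
      have hμi : μ i ≠ 1 := by
        intro h; exact hiS (Finset.mem_filter.mpr ⟨Finset.mem_univ i, h⟩)
      have h1 : (inner ℝ (T (u i)) x : ℝ) = inner ℝ (u i) (T x) := hsym (u i) x
      rw [hfix x hxW, hu i, show (inner ℝ (μ i • u i) x : ℝ) = μ i * inner ℝ (u i) x by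
        change inner ℝ ((μ i • u i : V) : EuclideanSpace ℝ (Fin d)) (x : EuclideanSpace ℝ (Fin d)) =
          μ i * inner ℝ ((u i : V) : EuclideanSpace ℝ (Fin d)) (x : EuclideanSpace ℝ (Fin d))
        rw [Submodule.coe_smul, real_inner_smul_left]] at h1
      have : (μ i - 1) * (inner ℝ (u i) x : ℝ) = 0 := by linarith
      rcases mul_eq_zero.mp this with h | h
      · exact absurd (by linarith : μ i = 1) hμi
      · exact h
    have hexpand : x = ∑ i ∈ S, (inner ℝ (u i) x : ℝ) • u i := by
      conv_lhs => rw [← u.sum_repr' x]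
      refine (Finset.sum_filter_of_ne ?_).symm
      intro i _ hne
      by_contra hiS
      have : i ∉ S := fun hmem => hiS ((Finset.mem_filter.mp hmem).2)
      exact hne (by rw [hzero i this, zero_smul])
    rw [hexpand]
    apply Submodule.sum_mem
    intro i hi
    exact Submodule.smul_mem _ _ (Submodule.subset_span ⟨i, hi, rfl⟩)
  have hcardS : m ≤ S.card := by
    have e1 : Submodule.comap V.subtype (V ⊓ W) ≃ₗ[ℝ] ↥(V ⊓ W) :=
      Submodule.comapSubtypeEquivOfLe inf_le_left
    have h1 : Module.finrank ℝ ↥(Submodule.comap V.subtype (V ⊓ W)) =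
        Module.finrank ℝ ↥(V ⊓ W) := e1.finrank_eq
    have h2 : Submodule.comap V.subtype (V ⊓ W) ≤
        Submodule.span ℝ ((fun i => u i) '' (S : Set (Fin k))) := by
      intro x hx
      exact hspan x (Submodule.mem_comap.mp hx).2
    have h3 := Submodule.finrank_mono (R := ℝ) (M := V) h2
    have h4 : Module.finrank ℝ
        ↥(Submodule.span ℝ ((fun i => u i) '' (S : Set (Fin k)))) ≤ S.card := by
      have himg : ((fun i => u i) '' (S : Set (Fin k))) = ↑(S.image (fun i => u i)) := by
        simp [Finset.coe_image]
      rw [himg]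
      refine le_trans (finrank_span_finset_le_card _) (Finset.card_image_le)
    omega
  -- permutation putting eigenvalue-1 indices first
  obtain ⟨S', hS'sub, hS'card⟩ := Finset.exists_subset_card_eq (show m ≤ S.card by omega)
  have hccard : (S'ᶜ).card = k - m := by
    rw [Finset.card_compl, hS'card, Fintype.card_fin]
  let g : Fin k → Fin k := fun i =>
    if h : (i : ℕ) < m then S'.orderEmbOfFin hS'card ⟨i, h⟩
    else (S'ᶜ).orderEmbOfFin hccard ⟨(i : ℕ) - m, by have := i.isLt; omega⟩
  have hgS : ∀ (i : Fin k) (h : (i : ℕ) < m), g i = S'.orderEmbOfFin hS'card ⟨i, h⟩ :=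
    fun i h => dif_pos h
  have hgC : ∀ (i : Fin k) (h : ¬ (i : ℕ) < m),
      g i = (S'ᶜ).orderEmbOfFin hccard ⟨(i : ℕ) - m, by have := i.isLt; omega⟩ :=
    fun i h => dif_neg h
  have hg_inj : Function.Injective g := by
    intro i j hij
    by_cases hi : (i : ℕ) < m <;> by_cases hj : (j : ℕ) < m
    · rw [hgS i hi, hgS j hj] at hij
      have := (S'.orderEmbOfFin hS'card).injective hij
      have := congrArg Fin.val this
      simp only at this
      exact Fin.ext this
    · rw [hgS i hi, hgC j hj] at hij
      have h1 := Finset.orderEmbOfFin_mem S' hS'card ⟨i, hi⟩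
      have h2 := Finset.orderEmbOfFin_mem S'ᶜ hccard ⟨(j : ℕ) - m, by have := j.isLt; omega⟩
      rw [hij] at h1
      exact absurd h1 (Finset.mem_compl.mp h2)
    · rw [hgC i hi, hgS j hj] at hij
      have h1 := Finset.orderEmbOfFin_mem S' hS'card ⟨j, hj⟩
      have h2 := Finset.orderEmbOfFin_mem S'ᶜ hccard ⟨(i : ℕ) - m, by have := i.isLt; omega⟩
      rw [hij] at h2
      exact absurd h1 (Finset.mem_compl.mp h2)
    · rw [hgC i hi, hgC j hj] at hij
      have := (S'ᶜ.orderEmbOfFin hccard).injective hij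
      have := congrArg Fin.val this
      simp only at this
      have hi' := i.isLt; have hj' := j.isLt
      exact Fin.ext (by omega)
  let e : Equiv.Perm (Fin k) := Equiv.ofBijective g (Finite.injective_iff_bijective.mp hg_inj)
  have he : ∀ i, e i = g i := fun i => rfl
  have he1 : ∀ i : Fin k, (i : ℕ) < m → μ (e i) = 1 := by
    intro i hi
    have : e i ∈ S' := by rw [he, hgS i hi]; exact Finset.orderEmbOfFin_mem S' hS'card _
    have : e i ∈ S := hS'sub this
    exact (Finset.mem_filter.mp this).2
  -- the final bases
  set v : Fin k → EuclideanSpace ℝ (Fin d) := fun i => v0 (e i) with hvdef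
  set a : Fin k → ℝ := fun i => ‖Q (v i)‖ with hadef
  set w : Fin k → EuclideanSpace ℝ (Fin d) := fun i => (a i)⁻¹ • Q (v i) with hwdef
  have hvV : ∀ i, v i ∈ V := fun i => hv0V (e i)
  have hvn : ∀ i, ‖v i‖ = 1 := fun i => hv0n (e i)
  have hacos : ∀ i, Real.cos θ ≤ a i := fun i => hC (v i) (hvV i) (hvn i)
  have hapos : ∀ i, 0 < a i := fun i => lt_of_lt_of_le hcosθ (hacos i)
  have ha1 : ∀ i, a i ≤ 1 := by
    intro i
    have := proj_norm_le W (v i)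
    rw [hvn i] at this
    exact this
  have hasq : ∀ i, a i ^ 2 = μ (e i) := fun i => hQnormsq (e i)
  have hPP' : ∀ i j, (inner ℝ (Q (v i)) (Q (v j)) : ℝ) = μ (e i) * (if i = j then 1 else 0) := by
    intro i j
    rw [show (inner ℝ (Q (v i)) (Q (v j)) : ℝ) = inner ℝ (Q (v0 (e i))) (Q (v0 (e j))) from rfl,
      hPP]
    by_cases h : i = j
    · rw [if_pos (congrArg e h), if_pos h]
    · rw [if_neg (fun hh => h (e.injective hh)), if_neg h]
  have hvv : ∀ i j, (inner ℝ (v i) (v j) : ℝ) = if i = j then 1 else 0 := by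
    intro i j
    rw [show (inner ℝ (v i) (v j) : ℝ) = inner ℝ (v0 (e i)) (v0 (e j)) from rfl, hv0inner]
    by_cases h : i = j
    · rw [if_pos (congrArg e h), if_pos h]
    · rw [if_neg (fun hh => h (e.injective hh)), if_neg h]
  have hvQ : ∀ i j, (inner ℝ (v i) (Q (v j)) : ℝ) = inner ℝ (Q (v i)) (Q (v j)) :=
    fun i j => (proj_inner_eq W (v i) (Q (v j)) (SetLike.coe_mem _)).symm
  have hvw : ∀ i j, (inner ℝ (v i) (w j) : ℝ) = (a j)⁻¹ * (μ (e i) * (if i = j then 1 else 0)) := by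
    intro i j
    rw [show (inner ℝ (v i) (w j) : ℝ) = inner ℝ (v i) ((a j)⁻¹ • Q (v j)) from rfl,
      real_inner_smul_right, hvQ, hPP']
  have hvwii : ∀ i, (inner ℝ (v i) (w i) : ℝ) = a i := by
    intro i
    rw [hvw i i, if_pos rfl, mul_one, ← hasq i, sq]
    field_simp
  have hvw0 : ∀ i j, i ≠ j → (inner ℝ (v i) (w j) : ℝ) = 0 := by
    intro i j h
    rw [hvw i j, if_neg h, mul_zero, mul_zero]
  have hww : ∀ i j, (inner ℝ (w i) (w j) : ℝ) = if i = j then 1 else 0 := by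
    intro i j
    have step : (inner ℝ (w i) (w j) : ℝ) = (a i)⁻¹ * ((a j)⁻¹ * inner ℝ (Q (v i)) (Q (v j))) := by
      rw [show (inner ℝ (w i) (w j) : ℝ)
          = inner ℝ ((a i)⁻¹ • Q (v i)) ((a j)⁻¹ • Q (v j)) from rfl,
        real_inner_smul_left, real_inner_smul_right]
    rw [step, hPP']
    by_cases h : i = j
    · subst h
      rw [if_pos rfl, ← hasq i, sq]
      field_simp
      exact div_self (hapos i).ne'
    · rw [if_neg h]
      simp
  have hworth : Orthonormal ℝ w := by
    rw [orthonormal_iff_ite]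
    exact hww
  have hvorth : Orthonormal ℝ v := hv0.comp e e.injective
  -- spans
  have hspanv : Submodule.span ℝ (Set.range v) = V := by
    have h1 : Set.range v = Set.range v0 := e.surjective.range_comp v0
    have h2 : Set.range v0 = V.subtype '' Set.range (u : Fin k → V) := by
      rw [← Set.range_comp]; rfl
    have htop : Submodule.span ℝ (Set.range (u : Fin k → V)) = ⊤ := by
      rw [← u.coe_toBasis]; exact u.toBasis.span_eq
    rw [h1, h2, Submodule.span_image, htop, Submodule.map_subtype_top]
  have hwW : ∀ i, w i ∈ W := fun i => Submodule.smul_mem _ _ (SetLike.coe_mem _)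
  have hspanw : Submodule.span ℝ (Set.range w) = W := by
    apply Submodule.eq_of_le_of_finrank_le
    · rw [Submodule.span_le]; rintro x ⟨i, rfl⟩; exact hwW i
    · rw [hW, finrank_span_eq_card hworth.linearIndependent, Fintype.card_fin]
  -- equality on the first m indices
  have heq : ∀ i : Fin k, (i : ℕ) < m → v i = w i := by
    intro i hi
    have hμ1 : μ (e i) = 1 := he1 i hi
    have ha' : a i = 1 := by nlinarith [hapos i, hasq i]
    have hn : ‖v i - w i‖ ^ 2 = 0 := by
      rw [norm_sub_sq_real, hvwii i, ha', hvn i, hworth.1 i]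
      norm_num
    have : v i - w i = 0 := by
      rw [← norm_eq_zero]
      exact pow_eq_zero_iff (n := 2) (by norm_num) |>.mp hn
    exact sub_eq_zero.mp this
  refine ⟨v, w, hvorth, hspanv, hworth, hspanw, heq, ?_, ?_, ?_⟩
  · intro i
    have hsm : InnerProductGeometry.angle (v i) (w i)
        = InnerProductGeometry.angle (v i) (Q (v i)) := by
      rw [show w i = (a i)⁻¹ • Q (v i) from rfl]
      exact InnerProductGeometry.angle_smul_right_of_pos _ _ (inv_pos.mpr (hapos i))
    rw [hsm]
    exact hang (v i) (hvV i) (hvn i)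
  · intro i j
    by_cases hij : i = j
    · subst hij
      have hvvii : (inner ℝ (v i) (v i) : ℝ) = 1 := by simpa using hvv i i
      have hinner : (inner ℝ (v i) (w i - v i) : ℝ) = a i - 1 := by
        rw [inner_sub_right, hvwii i, hvvii]
      rcases eq_or_lt_of_le (ha1 i) with hone | hlt
      · have h0 : (inner ℝ (v i) (w i - v i) : ℝ) = 0 := by rw [hinner, hone]; ring
        rw [Set.mem_Icc,
          (InnerProductGeometry.inner_eq_zero_iff_angle_eq_pi_div_two _ _).mp h0]
        constructor <;> linarith
      · set b : ℝ := 1 - a i with hbdef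
        have hb : 0 < b := by simp only [hbdef]; linarith
        have hb2 : b ≤ 1 - Real.cos θ := by have := hacos i; simp only [hbdef]; linarith
        have hnormsq : ‖w i - v i‖ ^ 2 = 2 * b := by
          rw [norm_sub_sq_real, hworth.1 i, hvn i, real_inner_comm, hvwii i]
          simp only [hbdef]; ring
        have hnorm : ‖w i - v i‖ = Real.sqrt (2 * b) := by
          rw [← hnormsq]; exact (Real.sqrt_sq (norm_nonneg _)).symm
        have hs2 : (0:ℝ) < Real.sqrt 2 := Real.sqrt_pos.mpr (by norm_num)
        have hsb : (0:ℝ) < Real.sqrt b := Real.sqrt_pos.mpr hb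
        have hratio : (a i - 1) / (1 * ‖w i - v i‖) = -Real.sqrt (b / 2) := by
          rw [one_mul, hnorm, Real.sqrt_mul (by norm_num : (0:ℝ) ≤ 2) b,
            Real.sqrt_div hb.le 2]
          have hb' : a i - 1 = -(Real.sqrt b * Real.sqrt b) := by
            rw [Real.mul_self_sqrt hb.le]; simp only [hbdef]; ring
          rw [hb']
          field_simp
        have hangle : InnerProductGeometry.angle (v i) (w i - v i)
            = Real.arccos (-Real.sqrt (b / 2)) := by
          unfold InnerProductGeometry.angle
          rw [hinner, hvn i, hratio]
        rw [Set.mem_Icc, hangle, Real.arccos_eq_pi_div_two_sub_arcsin, Real.arcsin_neg]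
        have ht0 : 0 ≤ Real.sqrt (b / 2) := Real.sqrt_nonneg _
        have hsinnn : 0 ≤ Real.sin (θ / 2) :=
          Real.sin_nonneg_of_nonneg_of_le_pi (by linarith) (by linarith [Real.pi_pos])
        have hsinsq : Real.sin (θ / 2) ^ 2 = 1 / 2 - Real.cos θ / 2 := by
          have h := Real.sin_sq_eq_half_sub (θ / 2)
          rwa [show 2 * (θ / 2) = θ by ring] at h
        have hts : Real.sqrt (b / 2) ≤ Real.sin (θ / 2) := by
          calc Real.sqrt (b / 2) ≤ Real.sqrt (Real.sin (θ / 2) ^ 2) :=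
                Real.sqrt_le_sqrt (by rw [hsinsq]; linarith)
            _ = Real.sin (θ / 2) := Real.sqrt_sq hsinnn
        have harc1 : Real.arcsin (Real.sqrt (b / 2)) ≤ θ / 2 := by
          have h2 : Real.arcsin (Real.sin (θ / 2)) = θ / 2 :=
            Real.arcsin_sin (by linarith [Real.pi_pos]) (by linarith)
          calc Real.arcsin (Real.sqrt (b / 2)) ≤ Real.arcsin (Real.sin (θ / 2)) :=
                Real.monotone_arcsin hts
            _ = θ / 2 := h2
        have harc0 : 0 ≤ Real.arcsin (Real.sqrt (b / 2)) := Real.arcsin_nonneg.mpr ht0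
        constructor <;> linarith
    · have hvvij : (inner ℝ (v i) (v j) : ℝ) = 0 := by simpa [hij] using hvv i j
      have h0 : (inner ℝ (v i) (w j - v j) : ℝ) = 0 := by
        rw [inner_sub_right, hvw0 i j hij, hvvij]; ring
      rw [Set.mem_Icc,
        (InnerProductGeometry.inner_eq_zero_iff_angle_eq_pi_div_two _ _).mp h0]
      constructor <;> linarith
  · intro i j hne _
    exact hvw0 i j hne
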